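/- arXiv:1105.5091 — 3 statements merged into one kernel-verified Lean document; each statement's English description precedes it below -/
import Mathlib

section
/- Let d ∈ ℕ and let p be the partition of {1,…,d} whose classes are the singletons {1},…,{m} together with {m+1,…,d} (for m ≤ d), and similarly q with parameter n ≤ d. Then the double cosets S_p\S_d/S_q are in bijection with the set of partial bijections between {1,…,m} and {1,…,n} whose 'total size' m + n − (number of matched pairs) is at most d; equivalently, with recollements r of I = {1,…,m} and J = {1,…,n} satisfying #r ≤ d. -/
/-- A recollement of `I` and `J`: an equivalence relation on `I ⊔ J` whose
classes contain at most one element of `I` and at most one element of `J`. -/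
def IsRecollement {I J : Type*} (r : Setoid (I ⊕ J)) : Prop :=
  (∀ i i' : I, r (Sum.inl i) (Sum.inl i') → i = i') ∧
  (∀ j j' : J, r (Sum.inr j) (Sum.inr j') → j = j')

/-- The partition of `{1,…,d}` whose classes are the singletons
`{1},…,{m}` together with the block `{m+1,…,d}`. -/
def youngSetoid (d m : ℕ) : Setoid (Fin d) :=
  ⟨fun a b => a = b ∨ (m ≤ (a : ℕ) ∧ m ≤ (b : ℕ)),
    ⟨fun _ => Or.inl rfl,
     fun h => h.elim (fun e => Or.inl e.symm) (fun h => Or.inr ⟨h.2, h.1⟩),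
     by
      rintro a b c (rfl | h1) h2
      · exact h2
      · rcases h2 with rfl | h2
        · exact Or.inr h1
        · exact Or.inr ⟨h1.1, h2.2⟩⟩⟩

/-- The Young subgroup `S_p` attached to a partition `p`. -/
def youngSubgroup {X : Type*} (p : Setoid X) : Subgroup (Equiv.Perm X) where
  carrier := {g : Equiv.Perm X | ∀ x : X, p x (g x)}
  one_mem' := fun x => p.refl x
  mul_mem' := by
    intro g h hg hh x
    exact p.trans (hh x) (hg (h x))
  inv_mem' := by
    intro g hg x
    have := hg (g⁻¹ x)
    simp only [Equiv.Perm.inv_def, Equiv.apply_symm_apply] at this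
    exact p.symm this


/-!
A permutation `g` of `Fin d` determines the recollement of `Fin m` and `Fin n` given by the kernel
of the map `Fin m ⊕ Fin n → Fin d` sending `i ↦ i` and `j ↦ g j`: it glues `i` to `j` exactly when
`g j = i`. Since `S_p` fixes `Fin m` pointwise and `S_q` fixes `Fin n` pointwise, replacing `g` by
`a g b` composes this map with `a`, so the recollement only depends on the double coset.
Conversely, two maps out of a finite type with the same kernel differ by a permutation `σ`; for the
maps of `g` and `g'`, `σ` fixes `Fin m` and `σ g` agrees with `g'` on `Fin n`, so
`g' ∈ S_p g S_q`. Every recollement `r` with `#r ≤ d` arises: embed its quotient in `Fin d`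
extending the inclusion of `Fin m`, and extend the resulting injection of `Fin n` to a permutation.
-/

open Function

theorem Setoid.ker_comp_of_injective {α β γ : Type*} {e : β → γ} (he : Injective e) (f : α → β) :
    Setoid.ker (e ∘ f) = Setoid.ker f :=
  Setoid.ext fun _ _ => he.eq_iff

theorem Equiv.Perm.exists_extending_of_ker_eq {α β : Type*} [Finite α] {f g : α → β}
    (h : Setoid.ker f = Setoid.ker g) : ∃ σ : Perm β, ∀ a, σ (f a) = g a := by
  obtain ⟨σ, hσ⟩ := exists_extending_pair (Setoid.kerLift f) (Quotient.lift g h.le)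
    (Setoid.kerLift_injective f) ((Setoid.lift_injective_iff_ker_eq_of_le h.le).2 h.symm)
  exact ⟨σ, fun a => hσ ⟦a⟧⟩

namespace Recollement

open Equiv

variable {d m n : ℕ}

theorem mem_youngSubgroup_youngSetoid_iff (hm : m ≤ d) {g : Perm (Fin d)} :
    g ∈ youngSubgroup (youngSetoid d m) ↔ ∀ i : Fin m, g (Fin.castLE hm i) = Fin.castLE hm i := by
  constructor
  · intro hg i
    exact ((hg (Fin.castLE hm i)).resolve_right fun h => by
      simp only [Fin.val_castLE] at h; omega).symm
  · intro hg x
    by_cases hx : (x : ℕ) < m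
    · exact Or.inl (hg ⟨x, hx⟩).symm
    · refine Or.inr ⟨not_lt.1 hx, not_lt.1 fun hgx => hx ?_⟩
      have hfix : g (g x) = g x := hg ⟨g x, hgx⟩
      rwa [g.injective hfix] at hgx

def matchMap (hm : m ≤ d) (hn : n ≤ d) (g : Perm (Fin d)) : Fin m ⊕ Fin n → Fin d :=
  Sum.elim (Fin.castLE hm) (g ∘ Fin.castLE hn)

def recollementOf (hm : m ≤ d) (hn : n ≤ d) (g : Perm (Fin d)) : Setoid (Fin m ⊕ Fin n) :=
  Setoid.ker (matchMap hm hn g)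

variable (hm : m ≤ d) (hn : n ≤ d)

theorem isRecollement_recollementOf (g : Perm (Fin d)) : IsRecollement (recollementOf hm hn g) :=
  ⟨fun _ _ h => Fin.castLE_injective hm h, fun _ _ h => Fin.castLE_injective hn (g.injective h)⟩

theorem card_quotient_recollementOf_le (g : Perm (Fin d)) :
    Nat.card (Quotient (recollementOf hm hn g)) ≤ d :=
  (Nat.card_le_card_of_injective _ (Setoid.kerLift_injective _)).trans (Nat.card_fin d).le

theorem matchMap_mul_mul {a g b : Perm (Fin d)} (ha : a ∈ youngSubgroup (youngSetoid d m))
    (hb : b ∈ youngSubgroup (youngSetoid d n)) :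
    matchMap hm hn (a * g * b) = a ∘ matchMap hm hn g := by
  funext x
  rcases x with i | j
  · exact ((mem_youngSubgroup_youngSetoid_iff hm).1 ha i).symm
  · simp [matchMap, (mem_youngSubgroup_youngSetoid_iff hn).1 hb j]

theorem recollementOf_eq_iff {g g' : Perm (Fin d)} :
    recollementOf hm hn g = recollementOf hm hn g' ↔
      ∃ a ∈ youngSubgroup (youngSetoid d m), ∃ b ∈ youngSubgroup (youngSetoid d n),
        g' = a * g * b := by
  constructor
  · intro h
    obtain ⟨σ, hσ⟩ := Perm.exists_extending_of_ker_eq h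
    refine ⟨σ, (mem_youngSubgroup_youngSetoid_iff hm).2 fun i => hσ (.inl i), (σ * g)⁻¹ * g',
      (mem_youngSubgroup_youngSetoid_iff hn).2 fun j => ?_, by group⟩
    rw [Perm.mul_apply, Perm.inv_eq_iff_eq]
    exact (hσ (.inr j)).symm
  · rintro ⟨a, ha, b, hb, rfl⟩
    rw [recollementOf, recollementOf, matchMap_mul_mul hm hn ha hb,
      Setoid.ker_comp_of_injective a.injective]

theorem exists_recollementOf_eq {r : Setoid (Fin m ⊕ Fin n)} (hr : IsRecollement r)
    (hcard : Nat.card (Quotient r) ≤ d) : ∃ g : Perm (Fin d), recollementOf hm hn g = r := by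
  let E₀ : Quotient r ↪ Fin d := (Finite.equivFin _).toEmbedding.trans (Fin.castLEEmb hcard)
  have hinl : Injective fun i : Fin m => (⟦.inl i⟧ : Quotient r) :=
    fun i i' h => hr.1 i i' (Quotient.exact h)
  have hinr : Injective fun j : Fin n => (⟦.inr j⟧ : Quotient r) :=
    fun j j' h => hr.2 j j' (Quotient.exact h)
  obtain ⟨σ, hσ⟩ := Perm.exists_extending_pair _ (Fin.castLE hm) (E₀.injective.comp hinl)
    (Fin.castLE_injective hm)
  let E : Quotient r ↪ Fin d := E₀.trans σ.toEmbedding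
  obtain ⟨g, hg⟩ := Perm.exists_extending_pair (Fin.castLE hn) _ (Fin.castLE_injective hn)
    (E.injective.comp hinr)
  have hmatch : matchMap hm hn g = E ∘ Quotient.mk r := by
    funext x
    rcases x with i | j
    · exact (hσ i).symm
    · exact hg j
  refine ⟨g, ?_⟩
  rw [recollementOf, hmatch, Setoid.ker_comp_of_injective E.injective]
  exact Setoid.ker_mk_eq r

end Recollement

/-- For `m, n ≤ d`, the double cosets `S_p\S_d/S_q` for the Young subgroups
of the partitions `{{1},…,{m},{m+1,…,d}}` and `{{1},…,{n},{n+1,…,d}}` are in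
bijection with the recollements `r` of `{1,…,m}` and `{1,…,n}` with `#r ≤ d`. -/
theorem doset_equiv_recollements (d m n : ℕ) (hm : m ≤ d) (hn : n ≤ d) :
    Nonempty
      (DoubleCoset.Quotient ((youngSubgroup (youngSetoid d m) : Subgroup (Equiv.Perm (Fin d))) : Set (Equiv.Perm (Fin d)))
          ((youngSubgroup (youngSetoid d n) : Subgroup (Equiv.Perm (Fin d))) : Set (Equiv.Perm (Fin d))) ≃
        {r : Setoid (Fin m ⊕ Fin n) // IsRecollement r ∧ Nat.card (Quotient r) ≤ d}) := by
  have hrel {g g' : Equiv.Perm (Fin d)} :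
      Recollement.recollementOf hm hn g = Recollement.recollementOf hm hn g' ↔
        DoubleCoset.setoid _ _ g g' :=
    (Recollement.recollementOf_eq_iff hm hn).trans DoubleCoset.rel_iff.symm
  let Φ : DoubleCoset.Quotient _ _ →
      {r : Setoid (Fin m ⊕ Fin n) // IsRecollement r ∧ Nat.card (Quotient r) ≤ d} :=
    Quotient.lift
      (fun g => ⟨Recollement.recollementOf hm hn g,
        Recollement.isRecollement_recollementOf hm hn g,
        Recollement.card_quotient_recollementOf_le hm hn g⟩)
      (fun _ _ h => Subtype.ext (hrel.2 h))
  refine ⟨Equiv.ofBijective Φ ⟨?_, ?_⟩⟩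
  · rintro ⟨g⟩ ⟨g'⟩ h
    exact Quotient.sound (hrel.1 (congrArg Subtype.val h))
  · rintro ⟨r, hr, hcard⟩
    obtain ⟨g, rfl⟩ := Recollement.exists_recollementOf_eq hm hn hr hcard
    exact ⟨DoubleCoset.mk _ _ g, rfl⟩
end

section
/- Let I, J be finite sets and let r be a recollement of I and J. In the poset of recollements of I and J, ordered by s ≤ r iff every r-class is contained in an s-class with the recollement property, the interval {u : recollement | s ≤ u ≤ r} below a fixed r and above s is order-isomorphic to the power set of a set of cardinality #r − #s; consequently the Möbius function of the poset satisfies μ(s, r) = (−1)^{#r − #s}. -/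
/-- The paper's order on recollements: `s ≤ r` iff `r` refines `s`,
i.e. `x ∼_r y` implies `x ∼_s y`. -/
def paperLE {X : Type*} (s r : Setoid X) : Prop := ∀ x y, r x y → s x y

open Sum

namespace RecAux
variable {I J : Type*}

def pairsOf (u : Setoid (I ⊕ J)) : Set (I × J) := {p | u (inl p.1) (inr p.2)}

lemma pairsOf_mono {a b : Setoid (I ⊕ J)} (h : paperLE a b) : pairsOf b ⊆ pairsOf a :=
  fun _ hp => h _ _ hp

lemma paperLE_iff {a b : Setoid (I ⊕ J)} (hb : IsRecollement b) :
    paperLE a b ↔ pairsOf b ⊆ pairsOf a := by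
  constructor
  · exact pairsOf_mono
  · intro h x y hxy
    match x, y with
    | inl i, inl i' => rw [hb.1 i i' hxy]
    | inr j, inr j' => rw [hb.2 j j' hxy]
    | inl i, inr j => exact h (show (i, j) ∈ pairsOf b from hxy)
    | inr j, inl i =>
      exact b.symm hxy |> fun h' => a.symm (h (show (i, j) ∈ pairsOf b from h'))

lemma setoid_eq {a b : Setoid (I ⊕ J)} (ha : IsRecollement a) (hb : IsRecollement b)
    (h : pairsOf a = pairsOf b) : a = b := by
  have h1 : paperLE a b := (paperLE_iff hb).2 h.ge
  have h2 : paperLE b a := (paperLE_iff ha).2 h.le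
  exact Setoid.ext fun x y => ⟨h2 x y, h1 x y⟩

end RecAux

namespace RecAux
variable {I J : Type*}

def mkSetoid (M : Set (I × J))
    (hrow : ∀ ⦃i i' j⦄, (i, j) ∈ M → (i', j) ∈ M → i = i')
    (hcol : ∀ ⦃i j j'⦄, (i, j) ∈ M → (i, j') ∈ M → j = j') : Setoid (I ⊕ J) where
  r x y := x = y ∨ (∃ i j, (i, j) ∈ M ∧ x = inl i ∧ y = inr j) ∨
    (∃ i j, (i, j) ∈ M ∧ x = inr j ∧ y = inl i)
  iseqv := by
    refine ⟨fun x => Or.inl rfl, ?_, ?_⟩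
    · rintro x y (rfl | ⟨i, j, h, rfl, rfl⟩ | ⟨i, j, h, rfl, rfl⟩)
      · exact Or.inl rfl
      · exact Or.inr (Or.inr ⟨i, j, h, rfl, rfl⟩)
      · exact Or.inr (Or.inl ⟨i, j, h, rfl, rfl⟩)
    · rintro x y z (rfl | ⟨i, j, h, rfl, rfl⟩ | ⟨i, j, h, rfl, rfl⟩) hyz
      · exact hyz
      · rcases hyz with rfl | ⟨i', j', h', hh, _⟩ | ⟨i', j', h', hh, rfl⟩
        · exact Or.inr (Or.inl ⟨i, j, h, rfl, rfl⟩)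
        · exact absurd hh (by simp)
        · obtain rfl : j' = j := by injection hh with h''; exact h''.symm
          exact Or.inl (by rw [hrow h' h])
      · rcases hyz with rfl | ⟨i', j', h', hh, rfl⟩ | ⟨i', j', h', hh, _⟩
        · exact Or.inr (Or.inr ⟨i, j, h, rfl, rfl⟩)
        · obtain rfl : i' = i := by injection hh with h''; exact h''.symm
          exact Or.inl (by rw [hcol h' h])
        · exact absurd hh (by simp)

lemma mkSetoid_isRecollement (M : Set (I × J)) (hrow) (hcol) :
    IsRecollement (mkSetoid M hrow hcol) := by
  constructor
  · rintro i i' (h | ⟨a, b, _, h1, h2⟩ | ⟨a, b, _, h1, h2⟩)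
    · injection h
    · exact absurd h2 (by simp)
    · exact absurd h1 (by simp)
  · rintro j j' (h | ⟨a, b, _, h1, h2⟩ | ⟨a, b, _, h1, h2⟩)
    · injection h
    · exact absurd h1 (by simp)
    · exact absurd h2 (by simp)

lemma pairsOf_mkSetoid (M : Set (I × J)) (hrow) (hcol) :
    pairsOf (mkSetoid M hrow hcol) = M := by
  ext ⟨i, j⟩
  constructor
  · rintro (h | ⟨a, b, hm, h1, h2⟩ | ⟨a, b, hm, h1, h2⟩)
    · exact absurd h (by simp)
    · obtain rfl : a = i := by injection h1 with h''; exact h''.symm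
      obtain rfl : b = j := by injection h2 with h''; exact h''.symm
      exact hm
    · exact absurd h1 (by simp)
  · intro hm
    exact Or.inr (Or.inl ⟨i, j, hm, rfl, rfl⟩)

end RecAux

namespace RecAux
variable {I J : Type*}

def unm (u : Setoid (I ⊕ J)) : Set J := {j | ∀ i, ¬ u (inl i) (inr j)}

lemma card_quot [Finite I] [Finite J] (u : Setoid (I ⊕ J)) (hu : IsRecollement u) :
    Nat.card (Quotient u) = Nat.card I + Nat.card (unm u) := by
  classical
  let f : I ⊕ J → I ⊕ (unm u) := fun x =>
    match x with
    | inl i => inl i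
    | inr j =>
      if h : ∃ i, u (inl i) (inr j) then inl h.choose
      else inr ⟨j, fun i hi => h ⟨i, hi⟩⟩
  have hf : ∀ x y, u x y → f x = f y := by
    intro x y hxy
    match x, y with
    | inl i, inl i' => rw [hu.1 i i' hxy]
    | inr j, inr j' => obtain rfl := hu.2 j j' hxy; rfl
    | inl i, inr j =>
      have he : ∃ i', u (inl i') (inr j) := ⟨i, hxy⟩
      have hc := he.choose_spec
      have : he.choose = i := hu.1 _ _ (u.trans hc (u.symm hxy))
      simp only [f, dif_pos he, this]
    | inr j, inl i =>
      have hxy' := u.symm hxy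
      have he : ∃ i', u (inl i') (inr j) := ⟨i, hxy'⟩
      have hc := he.choose_spec
      have : he.choose = i := hu.1 _ _ (u.trans hc (u.symm hxy'))
      simp only [f, dif_pos he, this]
  let F : Quotient u → I ⊕ (unm u) := Quotient.lift f hf
  have hFb : Function.Bijective F := by
    constructor
    · rintro ⟨x⟩ ⟨y⟩ hxy
      refine Quotient.sound ?_
      change f x = f y at hxy
      show u x y
      match x, y with
      | inl i, inl i' =>
        obtain rfl : i = i' := Sum.inl.inj hxy
        exact u.refl _
      | inl i, inr j =>
        by_cases he : ∃ i', u (inl i') (inr j)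
        · have : f (inr j) = inl he.choose := dif_pos he
          rw [this] at hxy
          obtain rfl : i = he.choose := by injection hxy
          show u _ _
          exact he.choose_spec
        · have : f (inr j) = inr ⟨j, fun i hi => he ⟨i, hi⟩⟩ := dif_neg he
          rw [this] at hxy; exact absurd hxy (by simp [f])
      | inr j, inl i =>
        by_cases he : ∃ i', u (inl i') (inr j)
        · have : f (inr j) = inl he.choose := dif_pos he
          rw [this] at hxy
          obtain rfl : he.choose = i := by injection hxy
          show u _ _
          exact u.symm he.choose_spec
        · have : f (inr j) = inr ⟨j, fun i hi => he ⟨i, hi⟩⟩ := dif_neg he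
          rw [this] at hxy; exact absurd hxy (by simp [f])
      | inr j, inr j' =>
        by_cases he : ∃ i', u (inl i') (inr j)
        · by_cases he' : ∃ i', u (inl i') (inr j')
          · have e1 : f (inr j) = inl he.choose := dif_pos he
            have e2 : f (inr j') = inl he'.choose := dif_pos he'
            rw [e1, e2] at hxy
            obtain h3 : he.choose = he'.choose := by injection hxy
            exact u.trans (u.symm he.choose_spec) (h3 ▸ he'.choose_spec)
          · have e1 : f (inr j) = inl he.choose := dif_pos he
            have e2 : f (inr j') = inr ⟨j', fun i hi => he' ⟨i, hi⟩⟩ := dif_neg he'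
            rw [e1, e2] at hxy; exact absurd hxy (by simp)
        · by_cases he' : ∃ i', u (inl i') (inr j')
          · have e1 : f (inr j) = inr ⟨j, fun i hi => he ⟨i, hi⟩⟩ := dif_neg he
            have e2 : f (inr j') = inl he'.choose := dif_pos he'
            rw [e1, e2] at hxy; exact absurd hxy (by simp)
          · have e1 : f (inr j) = inr ⟨j, fun i hi => he ⟨i, hi⟩⟩ := dif_neg he
            have e2 : f (inr j') = inr ⟨j', fun i hi => he' ⟨i, hi⟩⟩ := dif_neg he'
            rw [e1, e2] at hxy
            obtain h3 : j = j' := by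
              have := congrArg (fun z => Sum.elim (fun _ : I => j) Subtype.val z) hxy
              simpa using this
            exact h3 ▸ u.refl _
    · rintro (i | ⟨j, hj⟩)
      · exact ⟨⟦inl i⟧, rfl⟩
      · refine ⟨⟦inr j⟧, ?_⟩
        have he : ¬ ∃ i', u (inl i') (inr j) := fun ⟨i', hi'⟩ => hj i' hi'
        show F ⟦inr j⟧ = _
        have : F ⟦inr j⟧ = f (inr j) := rfl
        rw [this]
        simp only [f]
        rw [dif_neg he]
  rw [Nat.card_congr (Equiv.ofBijective F hFb), Nat.card_sum]

end RecAux

namespace RecAux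
variable {I J : Type*}

lemma unm_mono {s r : Setoid (I ⊕ J)} (hsr : paperLE s r) : unm s ⊆ unm r :=
  fun j hj i hri => hj i (hsr _ _ hri)

noncomputable def diffEquiv {s r : Setoid (I ⊕ J)} (hs : IsRecollement s)
    (hsr : paperLE s r) :
    ↥(pairsOf s \ pairsOf r) ≃ ↥(unm r \ unm s) := by
  classical
  refine Equiv.ofBijective (fun p => ⟨p.1.2, ?_, ?_⟩) ⟨?_, ?_⟩
  · intro i' hri'
    have hsi' : s (inl i') (inr p.1.2) := hsr _ _ hri'
    have : i' = p.1.1 := hs.1 _ _ (s.trans hsi' (s.symm p.2.1))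
    rw [this] at hri'
    exact p.2.2 hri'
  · intro h
    exact h p.1.1 p.2.1
  · rintro ⟨⟨i, j⟩, hp⟩ ⟨⟨i', j'⟩, hq⟩ h
    obtain rfl : j = j' := congrArg Subtype.val h
    obtain rfl : i = i' := hs.1 _ _ (s.trans hp.1 (s.symm hq.1))
    rfl
  · rintro ⟨j, hjr, hjs⟩
    have : ∃ i, s (inl i) (inr j) := by
      by_contra hc
      push_neg at hc
      exact hjs hc
    obtain ⟨i, hi⟩ := this
    exact ⟨⟨(i, j), hi, fun hc => hjr i hc⟩, rfl⟩

lemma card_sub [Finite I] [Finite J] {s r : Setoid (I ⊕ J)} (hs : IsRecollement s)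
    (hr : IsRecollement r) (hsr : paperLE s r) :
    Nat.card (Quotient r) - Nat.card (Quotient s) = Nat.card ↥(pairsOf s \ pairsOf r) := by
  rw [card_quot s hs, card_quot r hr, Nat.card_congr (diffEquiv hs hsr)]
  have hsub : unm s ⊆ unm r := unm_mono hsr
  rw [Nat.card_coe_set_eq, Nat.card_coe_set_eq, Nat.card_coe_set_eq,
    Set.ncard_diff hsub]
  have hle : (unm s).ncard ≤ (unm r).ncard := Set.ncard_le_ncard hsub (Set.toFinite _)
  omega

end RecAux

namespace RecAux
variable {I J : Type*}

def ofSub {s : Setoid (I ⊕ J)} (hs : IsRecollement s) (M : Set (I × J))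
    (hM : M ⊆ pairsOf s) : Setoid (I ⊕ J) :=
  mkSetoid M
    (fun _ _ _ h h' => hs.1 _ _ (s.trans (hM h) (s.symm (hM h'))))
    (fun _ _ _ h h' => hs.2 _ _ (s.trans (s.symm (hM h)) (hM h')))

lemma ofSub_isRecollement {s : Setoid (I ⊕ J)} (hs : IsRecollement s) (M) (hM) :
    IsRecollement (ofSub hs M hM) := mkSetoid_isRecollement _ _ _

lemma pairsOf_ofSub {s : Setoid (I ⊕ J)} (hs : IsRecollement s) (M) (hM) :
    pairsOf (ofSub hs M hM) = M := pairsOf_mkSetoid _ _ _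

lemma paperLE_ofSub {s : Setoid (I ⊕ J)} (hs : IsRecollement s) (M) (hM) :
    paperLE s (ofSub hs M hM) :=
  (paperLE_iff (ofSub_isRecollement hs M hM)).2 (by rw [pairsOf_ofSub]; exact hM)

lemma ofSub_paperLE {s r : Setoid (I ⊕ J)} (hs : IsRecollement s) (hr : IsRecollement r)
    (M) (hM) (hrM : pairsOf r ⊆ M) : paperLE (ofSub hs M hM) r :=
  (paperLE_iff hr).2 (by rw [pairsOf_ofSub]; exact hrM)

noncomputable def intervalSetEquiv {s r : Setoid (I ⊕ J)} (hs : IsRecollement s)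
    (hr : IsRecollement r) (hsr : paperLE s r) :
    {u : Setoid (I ⊕ J) // IsRecollement u ∧ paperLE s u ∧ paperLE u r} ≃
      Set ↥(pairsOf s \ pairsOf r) where
  toFun u := {x | ↑x ∈ pairsOf u.1}
  invFun B :=
    ⟨ofSub hs (pairsOf r ∪ Subtype.val '' B)
        (Set.union_subset (pairsOf_mono hsr) (fun p ⟨x, _, hx⟩ => hx ▸ x.2.1)),
      ofSub_isRecollement _ _ _, paperLE_ofSub _ _ _,
      ofSub_paperLE hs hr _ _ Set.subset_union_left⟩
  left_inv u := by
    obtain ⟨u, hu, hsu, hur⟩ := u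
    apply Subtype.ext
    dsimp only
    refine setoid_eq (ofSub_isRecollement _ _ _) hu ?_
    rw [pairsOf_ofSub]
    ext p
    simp only [Set.mem_union, Set.mem_image, Set.mem_setOf_eq]
    constructor
    · rintro (h | ⟨x, hx, rfl⟩)
      · exact pairsOf_mono hur h
      · exact hx
    · intro hp
      by_cases hpr : p ∈ pairsOf r
      · exact Or.inl hpr
      · exact Or.inr ⟨⟨p, pairsOf_mono hsu hp, hpr⟩, hp, rfl⟩
  right_inv B := by
    ext x
    simp only [Set.mem_setOf_eq, pairsOf_ofSub, Set.mem_union, Set.mem_image]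
    constructor
    · rintro (h | ⟨y, hy, hxy⟩)
      · exact absurd h x.2.2
      · rwa [Subtype.val_injective hxy] at hy
    · intro hx
      exact Or.inr ⟨x, hx, rfl⟩

lemma intervalSetEquiv_subset_iff {s r : Setoid (I ⊕ J)} (hs : IsRecollement s)
    (hr : IsRecollement r) (hsr : paperLE s r)
    (a b : {u : Setoid (I ⊕ J) // IsRecollement u ∧ paperLE s u ∧ paperLE u r}) :
    paperLE a.1 b.1 ↔ intervalSetEquiv hs hr hsr b ⊆ intervalSetEquiv hs hr hsr a := by
  rw [paperLE_iff b.2.1]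
  constructor
  · intro h x hx
    exact h hx
  · intro h p hp
    by_cases hpr : p ∈ pairsOf r
    · exact pairsOf_mono a.2.2.2 hpr
    · exact h (show (⟨p, pairsOf_mono b.2.2.1 hp, hpr⟩ : ↥(pairsOf s \ pairsOf r)) ∈ _ from hp)

end RecAux

namespace RecAux
variable {I J : Type*}

lemma interval_equiv [Finite I] [Finite J] {s r : Setoid (I ⊕ J)} (hs : IsRecollement s)
    (hr : IsRecollement r) (hsr : paperLE s r) :
    ∃ e : {u : Setoid (I ⊕ J) // IsRecollement u ∧ paperLE s u ∧ paperLE u r} ≃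
        Finset (Fin (Nat.card (Quotient r) - Nat.card (Quotient s))),
      (∀ a b, paperLE a.1 b.1 ↔ e a ⊆ e b) ∧
      ∀ a, Nat.card (Quotient r) - Nat.card (Quotient a.1) =
        Nat.card (Quotient r) - Nat.card (Quotient s) - (e a).card := by
  classical
  letI : Fintype ↥(pairsOf s \ pairsOf r) := Fintype.ofFinite _
  set d := Nat.card (Quotient r) - Nat.card (Quotient s) with hd
  have hcard : Fintype.card ↥(pairsOf s \ pairsOf r) = d := by
    rw [← Nat.card_eq_fintype_card, ← card_sub hs hr hsr]
  let φ : ↥(pairsOf s \ pairsOf r) ≃ Fin d := Fintype.equivFinOfCardEq hcard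
  let ec : Set ↥(pairsOf s \ pairsOf r) ≃ Set ↥(pairsOf s \ pairsOf r) :=
    ⟨compl, compl, compl_compl, compl_compl⟩
  let e := (((intervalSetEquiv hs hr hsr).trans ec).trans
    (Fintype.finsetEquivSet).symm).trans φ.finsetCongr
  have he : ∀ a, e a = ((intervalSetEquiv hs hr hsr a)ᶜ).toFinset.map φ.toEmbedding := by
    intro a
    simp [e, ec, Equiv.finsetCongr_apply]
  refine ⟨e, ?_, ?_⟩
  · intro a b
    rw [he, he, Finset.map_subset_map, Set.toFinset_subset_toFinset, Set.compl_subset_compl]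
    exact intervalSetEquiv_subset_iff hs hr hsr a b
  · intro a
    have h1 : Nat.card (Quotient r) - Nat.card (Quotient a.1) =
        Nat.card ↥(pairsOf a.1 \ pairsOf r) := card_sub a.2.1 hr a.2.2.2
    have h2 : pairsOf a.1 \ pairsOf r = Subtype.val '' (intervalSetEquiv hs hr hsr a) := by
      ext p
      constructor
      · rintro ⟨hpa, hpr⟩
        exact ⟨⟨p, pairsOf_mono a.2.2.1 hpa, hpr⟩, hpa, rfl⟩
      · rintro ⟨x, hx, rfl⟩
        exact ⟨hx, x.2.2⟩
    have h3 : Nat.card ↥(pairsOf a.1 \ pairsOf r) = (intervalSetEquiv hs hr hsr a).ncard := by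
      rw [h2, Nat.card_coe_set_eq, Set.ncard_image_of_injective _ Subtype.val_injective]
    have h4 : (e a).card = d - (intervalSetEquiv hs hr hsr a).ncard := by
      rw [he, Finset.card_map, Set.toFinset_compl, Finset.card_compl,
        ← Set.ncard_eq_toFinset_card', hcard]
    have h5 : (intervalSetEquiv hs hr hsr a).ncard ≤ d := by
      rw [← hcard, Set.ncard_eq_toFinset_card']
      exact Finset.card_le_univ _
    omega

end RecAux

namespace RecAux
lemma interval_equiv' [Finite I] [Finite J] {s r : Setoid (I ⊕ J)} {d : ℕ}
    (hs : IsRecollement s) (hr : IsRecollement r) (hsr : paperLE s r)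
    (hd : Nat.card (Quotient r) - Nat.card (Quotient s) = d) :
    ∃ e : {u : Setoid (I ⊕ J) // IsRecollement u ∧ paperLE s u ∧ paperLE u r} ≃
        Finset (Fin d),
      (∀ a b, paperLE a.1 b.1 ↔ e a ⊆ e b) ∧
      ∀ a, Nat.card (Quotient r) - Nat.card (Quotient a.1) = d - (e a).card := by
  subst hd
  exact interval_equiv hs hr hsr

lemma setoid_finite {X : Type*} [Finite X] : Finite (Setoid X) :=
  Finite.of_injective (fun u : Setoid X => ⇑u)
    (fun u v h => Setoid.ext fun a b => iff_of_eq (congrFun (congrFun h a) b))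

lemma negpow (n k : ℕ) (h : k ≤ n) : (-1 : ℤ) ^ (n - k) = (-1) ^ n * (-1) ^ k := by
  have h2 : (-1 : ℤ) ^ k * (-1) ^ k = 1 := by
    rw [← pow_add]
    exact Even.neg_one_pow ⟨k, rfl⟩
  conv_rhs => rw [← Nat.sub_add_cancel h, pow_add]
  rw [mul_assoc, h2, mul_one]

lemma mobius [Finite I] [Finite J] (μ : Setoid (I ⊕ J) → Setoid (I ⊕ J) → ℤ)
    (h1 : ∀ u : Setoid (I ⊕ J), IsRecollement u → μ u u = 1)
    (h2 : ∀ s' r' : Setoid (I ⊕ J), IsRecollement s' → IsRecollement r' →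
      paperLE s' r' → s' ≠ r' →
      (∑ᶠ u ∈ {u : Setoid (I ⊕ J) | IsRecollement u ∧ paperLE s' u ∧ paperLE u r'},
        μ u r') = 0) :
    ∀ d : ℕ, ∀ s r : Setoid (I ⊕ J), IsRecollement s → IsRecollement r → paperLE s r →
      Nat.card (Quotient r) - Nat.card (Quotient s) = d → μ s r = (-1 : ℤ) ^ d := by
  intro d
  induction d using Nat.strong_induction_on with
  | _ n IH =>
  intro s r hs hr hsr hd
  classical
  haveI : Finite (Setoid (I ⊕ J)) := setoid_finite
  haveI : Fintype {u : Setoid (I ⊕ J) // IsRecollement u ∧ paperLE s u ∧ paperLE u r} :=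
    Fintype.ofFinite _
  obtain ⟨e, he, hcard⟩ := interval_equiv' hs hr hsr hd
  by_cases hn0 : n = 0
  · haveI : IsEmpty (Fin n) := by rw [hn0]; infer_instance
    have hrs : paperLE r s :=
      (he ⟨r, hr, hsr, fun _ _ h => h⟩ ⟨s, hs, fun _ _ h => h, hsr⟩).2
        (by rw [Finset.eq_empty_of_isEmpty (e ⟨r, hr, hsr, fun _ _ h => h⟩)]
            exact Finset.empty_subset _)
    have hEq : s = r := Setoid.ext fun x y => ⟨hrs x y, hsr x y⟩
    rw [hEq, h1 r hr, hn0, pow_zero]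
  · -- n > 0; in particular s ≠ r
    have hne : s ≠ r := by
      rintro rfl
      rw [Nat.sub_self] at hd
      exact hn0 hd.symm
    have hsum := h2 s r hs hr hsr hne
    set S : Set (Setoid (I ⊕ J)) :=
      {u | IsRecollement u ∧ paperLE s u ∧ paperLE u r} with hS
    have hSf : S.Finite := Set.toFinite _
    rw [finsum_mem_eq_finite_toFinset_sum _ hSf] at hsum
    have hstep : ∑ u ∈ hSf.toFinset, μ u r =
        ∑ a : {u : Setoid (I ⊕ J) // IsRecollement u ∧ paperLE s u ∧ paperLE u r},
          μ a.1 r := by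
      refine Finset.sum_subtype _ (fun x => ?_) (fun u => μ u r)
      simp [hS]
    rw [hstep] at hsum
    rw [← Equiv.sum_comp e.symm
      (fun a : {u : Setoid (I ⊕ J) // IsRecollement u ∧ paperLE s u ∧ paperLE u r} =>
        μ a.1 r)] at hsum
    -- the element corresponding to ∅ is s
    have hesymm : (e.symm ∅).1 = s := by
      have h0 : e ⟨s, hs, fun _ _ h => h, hsr⟩ = ∅ := by
        have h0' := (he ⟨s, hs, fun _ _ h => h, hsr⟩ (e.symm ∅)).1 (e.symm ∅).2.2.1
        rw [Equiv.apply_symm_apply] at h0'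
        exact Finset.subset_empty.1 h0'
      rw [← h0, Equiv.symm_apply_apply]
    have hterm : ∀ A : Finset (Fin n), A ≠ ∅ → μ (e.symm A).1 r = (-1 : ℤ) ^ (n - A.card) := by
      intro A hA
      have hle : A.card ≤ n := le_trans (Finset.card_le_univ A) (by simp)
      have hpos : 0 < A.card := Finset.card_pos.2 (Finset.nonempty_iff_ne_empty.2 hA)
      have hcc : Nat.card (Quotient r) - Nat.card (Quotient (e.symm A).1) = n - A.card := by
        have h3 := hcard (e.symm A)
        rwa [Equiv.apply_symm_apply] at h3
      exact IH (n - A.card) (by omega) (e.symm A).1 r (e.symm A).2.1 hr (e.symm A).2.2.2 hcc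
    -- split off the empty set
    have hmem : (∅ : Finset (Fin n)) ∈ (Finset.univ : Finset (Finset (Fin n))) :=
      Finset.mem_univ _
    rw [← Finset.add_sum_erase _ _ hmem] at hsum
    have hrest : ∑ A ∈ (Finset.univ : Finset (Finset (Fin n))).erase ∅,
        μ (e.symm A).1 r = ∑ A ∈ (Finset.univ : Finset (Finset (Fin n))).erase ∅,
        (-1 : ℤ) ^ (n - A.card) := by
      refine Finset.sum_congr rfl fun A hA => ?_
      exact hterm A (Finset.ne_of_mem_erase hA)
    rw [hrest, hesymm] at hsum
    have htotal : ∑ A : Finset (Fin n), (-1 : ℤ) ^ (n - A.card) = 0 := by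
      have h4 : ∀ A : Finset (Fin n), (-1 : ℤ) ^ (n - A.card) = (-1) ^ n * (-1) ^ A.card :=
        fun A => negpow n A.card (le_trans (Finset.card_le_univ A) (by simp))
      simp_rw [h4, ← Finset.mul_sum]
      have h5 : ∑ A : Finset (Fin n), (-1 : ℤ) ^ A.card = 0 := by
        rw [← Finset.powerset_univ, Finset.sum_powerset_neg_one_pow_card]
        have huniv : (Finset.univ : Finset (Fin n)) ≠ ∅ := by
          simp [← Finset.card_eq_zero, hn0]
        simp [huniv]
      rw [h5, mul_zero]
    have hsplit : ∑ A : Finset (Fin n), (-1 : ℤ) ^ (n - A.card) =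
        (-1 : ℤ) ^ (n - (∅ : Finset (Fin n)).card) +
        ∑ A ∈ (Finset.univ : Finset (Finset (Fin n))).erase ∅, (-1 : ℤ) ^ (n - A.card) :=
      (Finset.add_sum_erase _ _ hmem).symm
    rw [htotal] at hsplit
    simp only [Finset.card_empty, Nat.sub_zero] at hsplit
    have hfin : ∑ A ∈ (Finset.univ : Finset (Finset (Fin n))).erase ∅, (-1 : ℤ) ^ (n - A.card) =
        -(-1 : ℤ) ^ n := by linarith
    rw [hfin] at hsum
    linarith

end RecAux


/-- For recollements `s ≤ r` of finite sets `I` and `J`, the interval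
`{u | s ≤ u ≤ r}` in the poset of recollements is order-isomorphic to the
power set of a set of cardinality `#r − #s`; consequently any Möbius function
of the poset of recollements satisfies `μ(s, r) = (−1)^{#r − #s}`. -/
theorem interval_in_recollements_and_mobius {I J : Type*} [Finite I] [Finite J]
    (s r : Setoid (I ⊕ J)) (hs : IsRecollement s) (hr : IsRecollement r)
    (hsr : paperLE s r) :
    (∃ e : {u : Setoid (I ⊕ J) // IsRecollement u ∧ paperLE s u ∧ paperLE u r} ≃
        Finset (Fin (Nat.card (Quotient r) - Nat.card (Quotient s))),
      ∀ a b, paperLE a.1 b.1 ↔ e a ⊆ e b) ∧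
    ∀ μ : Setoid (I ⊕ J) → Setoid (I ⊕ J) → ℤ,
      (∀ u : Setoid (I ⊕ J), IsRecollement u → μ u u = 1) →
      (∀ s' r' : Setoid (I ⊕ J), IsRecollement s' → IsRecollement r' →
        paperLE s' r' → s' ≠ r' →
        (∑ᶠ u ∈ {u : Setoid (I ⊕ J) | IsRecollement u ∧ paperLE s' u ∧ paperLE u r'},
          μ u r') = 0) →
      μ s r = (-1 : ℤ) ^ (Nat.card (Quotient r) - Nat.card (Quotient s)) := by
  constructor
  · obtain ⟨e, he, -⟩ := RecAux.interval_equiv hs hr hsr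
    exact ⟨e, he⟩
  · intro μ h1 h2
    exact RecAux.mobius μ h1 h2 _ s r hs hr hsr rfl
end

section
/- Let I, J, K be finite sets, r a recollement of I and J, and s a recollement of J and K. Let R(s∘r) be the set of recollements u of I, J, K (equivalence relations on I ⊔ J ⊔ K whose classes meet each of I, J, K in at most one element) whose restriction to I ⊔ J equals r and whose restriction to J ⊔ K equals s. Then for any u, u' ∈ R(s∘r), the difference #u − #(π₁,₃(u)) equals #u' − #(π₁,₃(u')), where π₁,₃ denotes the restriction of the equivalence relation to I ⊔ K. Moreover this common value equals the number of classes of u contained entirely in J. -/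
/-- A recollement of three sets `I`, `J`, `K`: an equivalence relation on
`I ⊔ J ⊔ K` whose classes contain at most one element of each of `I`, `J`, `K`. -/
def IsRecollement3 {I J K : Type*} (u : Setoid (I ⊕ J ⊕ K)) : Prop :=
  (∀ i i' : I, u (Sum.inl i) (Sum.inl i') → i = i') ∧
  (∀ j j' : J, u (Sum.inr (Sum.inl j)) (Sum.inr (Sum.inl j')) → j = j') ∧
  (∀ k k' : K, u (Sum.inr (Sum.inr k)) (Sum.inr (Sum.inr k')) → k = k')

/-- Restriction `π₁,₂` of an equivalence relation on `I ⊔ J ⊔ K` to `I ⊔ J`. -/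
def pi12 {I J K : Type*} (u : Setoid (I ⊕ J ⊕ K)) : Setoid (I ⊕ J) :=
  Setoid.comap (Sum.map id Sum.inl) u

/-- Restriction `π₂,₃` of an equivalence relation on `I ⊔ J ⊔ K` to `J ⊔ K`. -/
def pi23 {I J K : Type*} (u : Setoid (I ⊕ J ⊕ K)) : Setoid (J ⊕ K) :=
  Setoid.comap Sum.inr u

/-- Restriction `π₁,₃` of an equivalence relation on `I ⊔ J ⊕ K` to `I ⊔ K`. -/
def pi13 {I J K : Type*} (u : Setoid (I ⊕ J ⊕ K)) : Setoid (I ⊕ K) :=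
  Setoid.comap (Sum.map id Sum.inr) u

/-- The number of classes of `u` contained entirely in `J`. -/
noncomputable def orphanJCount {I J K : Type*} (u : Setoid (I ⊕ J ⊕ K)) : ℕ :=
  Nat.card {c : Quotient u //
    ∀ x : I ⊕ J ⊕ K, Quotient.mk u x = c → ∃ j : J, x = Sum.inr (Sum.inl j)}

section Aux
variable {I J K : Type*}

/-- orphan classes as a set -/
def orphanSet (u : Setoid (I ⊕ J ⊕ K)) : Set (Quotient u) :=
  {c | ∀ x : I ⊕ J ⊕ K, Quotient.mk u x = c → ∃ j : J, x = Sum.inr (Sum.inl j)}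

lemma orphanSet_eq_compl_range (u : Setoid (I ⊕ J ⊕ K)) :
    orphanSet u = (Set.range (Quotient.mk'' ∘ (Sum.map id Sum.inr : I ⊕ K → I ⊕ J ⊕ K)))ᶜ := by
  ext c
  constructor
  · rintro hc ⟨x, hx⟩
    obtain ⟨j, hj⟩ := hc _ hx
    cases x <;> simp [Sum.map] at hj
  · intro hc x hx
    cases x with
    | inl i => exact absurd ⟨Sum.inl i, hx⟩ hc
    | inr y =>
      cases y with
      | inl j => exact ⟨j, rfl⟩
      | inr k => exact absurd ⟨Sum.inr k, hx⟩ hc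

lemma card_eq (u : Setoid (I ⊕ J ⊕ K)) [Finite I] [Finite J] [Finite K] :
    Nat.card (Quotient u) = Nat.card (Quotient (pi13 u)) + orphanJCount u := by
  have e := Setoid.comapQuotientEquiv (Sum.map id Sum.inr : I ⊕ K → I ⊕ J ⊕ K) u
  have h1 : Nat.card (Quotient (pi13 u)) =
      (Set.range ((Quotient.mk'' : (I ⊕ J ⊕ K) → Quotient u) ∘ Sum.map id Sum.inr)).ncard := by
    rw [show pi13 u = Setoid.comap (Sum.map id Sum.inr) u from rfl, Nat.card_congr e,
      Nat.card_coe_set_eq]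
  have h2 : orphanJCount u = (orphanSet u).ncard := by
    rw [orphanJCount, ← Nat.card_coe_set_eq]; rfl
  rw [h1, h2, orphanSet_eq_compl_range,
    Set.ncard_add_ncard_compl _ (Set.toFinite _) (Set.toFinite _)]

/-- the j's whose class is orphan, described via pi12/pi23 -/
def orphanJ (r : Setoid (I ⊕ J)) (s : Setoid (J ⊕ K)) : Set J :=
  {j | (∀ i : I, ¬ r (Sum.inr j) (Sum.inl i)) ∧ (∀ k : K, ¬ s (Sum.inl j) (Sum.inr k))}

lemma orphan_count_eq (u : Setoid (I ⊕ J ⊕ K)) (hu : IsRecollement3 u) :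
    orphanJCount u = Nat.card (orphanJ (pi12 u) (pi23 u)) := by
  apply Nat.card_congr
  symm
  refine Equiv.ofBijective
    (fun j => ⟨Quotient.mk u (Sum.inr (Sum.inl j.1)), ?_⟩) ⟨?_, ?_⟩
  · intro x hx
    have hrel : u x (Sum.inr (Sum.inl j.1)) := Quotient.exact hx
    cases x with
    | inl i => exact absurd (u.symm hrel) (j.2.1 i)
    | inr y =>
      cases y with
      | inl j' => exact ⟨j', rfl⟩
      | inr k => exact absurd (u.symm hrel) (j.2.2 k)
  · intro a b hab
    have := Quotient.exact (congrArg Subtype.val hab)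
    exact Subtype.ext (hu.2.1 _ _ this)
  · rintro ⟨c, hc⟩
    obtain ⟨x, hx⟩ := Quotient.exists_rep c
    obtain ⟨j, rfl⟩ := hc x hx
    refine ⟨⟨j, ?_, ?_⟩, Subtype.ext hx⟩
    · intro i hi
      have : Quotient.mk u (Sum.inl i) = c := hx ▸ Quotient.sound (u.symm hi)
      obtain ⟨j', hj'⟩ := hc _ this
      simp at hj'
    · intro k hk
      have : Quotient.mk u (Sum.inr (Sum.inr k)) = c := hx ▸ Quotient.sound (u.symm hk)
      obtain ⟨j', hj'⟩ := hc _ this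
      simp at hj'

end Aux

/-- For two recollements `u, u'` of `I, J, K` with the same restrictions to
`I ⊔ J` and to `J ⊔ K`, the quantity `#u − #π₁,₃(u)` is the same for `u` and
`u'`, and it equals the number of classes of `u` contained entirely in `J`. -/
theorem deg_independent_of_extension {I J K : Type*} [Finite I] [Finite J] [Finite K]
    (u u' : Setoid (I ⊕ J ⊕ K)) (hu : IsRecollement3 u) (hu' : IsRecollement3 u')
    (h12 : pi12 u = pi12 u') (h23 : pi23 u = pi23 u') :
    Nat.card (Quotient u) - Nat.card (Quotient (pi13 u)) =
      Nat.card (Quotient u') - Nat.card (Quotient (pi13 u')) ∧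
    Nat.card (Quotient u) = Nat.card (Quotient (pi13 u)) + orphanJCount u := by
  have c1 := card_eq u
  have c2 := card_eq u'
  have ho : orphanJCount u = orphanJCount u' := by
    rw [orphan_count_eq u hu, orphan_count_eq u' hu', h12, h23]
  refine ⟨?_, c1⟩
  rw [c1, c2, ho, Nat.add_sub_cancel_left, Nat.add_sub_cancel_left]
end
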